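/- Let Ω ⊂ ℝ² be open, b : Ω → ℝ² locally Lipschitz continuous, and let λ > 0, ε > 0, M ≥ 0. Let u : Ω → ℝ be bounded, upper semicontinuous, and a viscosity subsolution of λu − ε⁻¹ b·Du − M = 0 in Ω. Let X : ℝ → Ω be a C¹ solution of X′(t) = b(X(t)) that is periodic with period T > 0 (X(t+T) = X(t) for all t). Set C = max{M, sup_Ω |u|}. Then for any two points x = X(s) and y = X(s′) on the orbit, |u(x) − u(y)| ≤ 2 ε C (λ + 1) T. -/

import Mathlib

open Filter Topology Set Metric

noncomputable section

/-- The plane `ℝ²` as a Euclidean space. -/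
abbrev E2 : Type := EuclideanSpace ℝ (Fin 2)

/-!
Along the orbit, `w = u ∘ X` is a one-dimensional subsolution of `λ w - ε⁻¹ w' - M ≤ 0`: if
`t ↦ w t + c t` has a local maximum at `t₀`, then `λ w t₀ + ε⁻¹ c ≤ M`, hence `c ≤ ε C (λ + 1)`.
This is proved by doubling the variables: maximizers of `u y + c t - (t - t₀)² - n ‖y - X t‖²`
converge to `(X t₀, t₀)`, the viscosity inequality holds at them with the test function
`n ‖· - X t‖²`, and the Lipschitz bound on `b` absorbs the error between `b y` and `b (X t)`.
So for `c > ε C (λ + 1)` the maximum of `w t + c t` over `t ≤ b` is attained at `b`, which gives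
`w a ≤ w b + ε C (λ + 1) (b - a)` for `a ≤ b`; periodicity bounds the oscillation by
`ε C (λ + 1) T`.
-/

open scoped RealInnerProductSpace NNReal

section Penalization

variable {α : Type*} [TopologicalSpace α] {Q : Set α} {f g : α → ℝ} {p₀ : α} {p : ℕ → α}

theorem IsCompact.tendsto_of_penalized_ge [FirstCountableTopology α] (hQ : IsCompact Q)
    (hf : UpperSemicontinuousOn f Q) (hg : ContinuousOn g Q) (hg0 : ∀ q ∈ Q, 0 ≤ g q)
    (hstrict : ∀ q ∈ Q, g q = 0 → q ≠ p₀ → f q < f p₀) (hpQ : ∀ n, p n ∈ Q)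
    (hp : ∀ n : ℕ, f p₀ + n * g (p n) ≤ f (p n)) :
    Tendsto p atTop (𝓝 p₀) := by
  have hfp : ∀ n, f p₀ ≤ f (p n) := fun n => by
    nlinarith [hp n, hg0 _ (hpQ n), (n.cast_nonneg : (0 : ℝ) ≤ n)]
  obtain ⟨B, hB⟩ := hf.bddAbove_of_isCompact hQ
  have hg_lim : Tendsto (fun n => g (p n)) atTop (𝓝 0) := by
    refine squeeze_zero' (.of_forall fun n => hg0 _ (hpQ n)) ?_
      (tendsto_const_div_atTop_nhds_zero_nat (B - f p₀))
    filter_upwards [eventually_gt_atTop 0] with n hn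
    rw [le_div_iff₀ (by exact_mod_cast hn)]
    linarith [hp n, hB (mem_image_of_mem f (hpQ n))]
  refine tendsto_of_subseq_tendsto fun ns hns => ?_
  obtain ⟨q, hq, ms, hms, hlim⟩ := hQ.tendsto_subseq fun k => hpQ (ns k)
  have hlimQ : Tendsto (fun k => p (ns (ms k))) atTop (𝓝[Q] q) :=
    tendsto_nhdsWithin_iff.2 ⟨hlim, .of_forall fun k => hpQ _⟩
  have hgq : g q = 0 :=
    tendsto_nhds_unique ((hg q hq).tendsto.comp hlimQ)
      (hg_lim.comp (hns.comp hms.tendsto_atTop))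
  obtain rfl : q = p₀ := by
    by_contra hne
    obtain ⟨k, hk⟩ := (hlimQ.eventually (hf q hq _ (hstrict q hq hgq hne))).exists
    exact (hfp _).not_gt hk
  exact ⟨ms, hlim⟩

theorem tendsto_penalty_of_penalized_ge (hf : UpperSemicontinuousWithinAt f Q p₀)
    (hg0 : ∀ q ∈ Q, 0 ≤ g q) (hpQ : ∀ n, p n ∈ Q) (hp : ∀ n : ℕ, f p₀ + n * g (p n) ≤ f (p n))
    (hlim : Tendsto p atTop (𝓝 p₀)) :
    Tendsto (fun n => f (p n)) atTop (𝓝 (f p₀)) ∧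
      Tendsto (fun n : ℕ => n * g (p n)) atTop (𝓝 0) := by
  have hpen : ∀ n : ℕ, 0 ≤ n * g (p n) := fun n => mul_nonneg n.cast_nonneg (hg0 _ (hpQ n))
  have hlimQ : Tendsto p atTop (𝓝[Q] p₀) := tendsto_nhdsWithin_iff.2 ⟨hlim, .of_forall hpQ⟩
  have hfp : Tendsto (fun n => f (p n)) atTop (𝓝 (f p₀)) := by
    refine tendsto_order.2 ⟨fun a ha => .of_forall fun n => ?_,
      fun a ha => hlimQ.eventually (hf a ha)⟩
    linarith [hp n, hpen n]
  refine ⟨hfp, squeeze_zero hpen (fun n => ?_) (by simpa using hfp.sub_const (f p₀))⟩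
  linarith [hp n]

end Penalization

section Doubling

variable {E : Type*} [NormedAddCommGroup E] {u : E → ℝ} {X : ℝ → E} {c t₀ : ℝ}

def doublingFunctional (u : E → ℝ) (X : ℝ → E) (c t₀ a : ℝ) (q : E × ℝ) : ℝ :=
  u q.1 + (c * q.2 - (q.2 - t₀) ^ 2 - a * ‖q.1 - X q.2‖ ^ 2)

theorem exists_seq_isLocalMax_doublingFunctional [ProperSpace E] {Ω : Set E} (hΩ : IsOpen Ω)
    (hu : UpperSemicontinuousOn u Ω) (hX : Continuous X) (ht₀ : X t₀ ∈ Ω)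
    (hmax : IsLocalMax (fun t => u (X t) + c * t) t₀) :
    ∃ p : ℕ → E × ℝ, Tendsto p atTop (𝓝 (X t₀, t₀)) ∧
      Tendsto (fun n => u (p n).1) atTop (𝓝 (u (X t₀))) ∧
      Tendsto (fun n : ℕ => n * ‖(p n).1 - X (p n).2‖ ^ 2) atTop (𝓝 0) ∧
      ∀ᶠ n : ℕ in atTop, IsLocalMax (doublingFunctional u X c t₀ n) (p n) := by
  obtain ⟨r, hr, hrΩ⟩ := nhds_basis_closedBall.mem_iff.1 (hΩ.mem_nhds ht₀)
  obtain ⟨δ, hδ, hδmax⟩ := nhds_basis_closedBall.eventually_iff.1 hmax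
  set Q := closedBall (X t₀) r ×ˢ closedBall t₀ δ
  set f : E × ℝ → ℝ := fun q => u q.1 + (c * q.2 - (q.2 - t₀) ^ 2)
  set g : E × ℝ → ℝ := fun q => ‖q.1 - X q.2‖ ^ 2
  have hQ : IsCompact Q := (isCompact_closedBall _ _).prod (isCompact_closedBall _ _)
  have hQ₀ : Q ∈ 𝓝 (X t₀, t₀) :=
    prod_mem_nhds (closedBall_mem_nhds _ hr) (closedBall_mem_nhds _ hδ)
  have huQ : UpperSemicontinuousOn (fun q : E × ℝ => u q.1) Q :=
    hu.comp continuousOn_fst fun q hq => hrΩ hq.1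
  have hfQ : UpperSemicontinuousOn f Q :=
    huQ.add (ContinuousOn.upperSemicontinuousOn (by fun_prop))
  have hΦ (n : ℕ) : UpperSemicontinuousOn (doublingFunctional u X c t₀ n) Q :=
    huQ.add (ContinuousOn.upperSemicontinuousOn (by fun_prop))
  choose p hpQ hpmax using fun n => (hΦ n).exists_isMaxOn ⟨_, mem_of_mem_nhds hQ₀⟩ hQ
  have hlow (n : ℕ) : f (X t₀, t₀) + n * g (p n) ≤ f (p n) := by
    have := hpmax n (mem_of_mem_nhds hQ₀)
    simp only [mem_ofPred_eq, doublingFunctional, sub_self, norm_zero] at this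
    simp only [f, g]
    linarith
  have hstrict : ∀ q ∈ Q, g q = 0 → q ≠ (X t₀, t₀) → f q < f (X t₀, t₀) := by
    rintro ⟨y, s⟩ ⟨-, hs⟩ hgq hne
    obtain rfl : y = X s := by simpa [g, sub_eq_zero] using hgq
    have hst : s - t₀ ≠ 0 := sub_ne_zero.2 fun h => hne (h ▸ rfl)
    have := hδmax hs
    simp only [f, sub_self]
    linarith [pow_pos (abs_pos.2 hst) 2, sq_abs (s - t₀)]
  have hg0 : ∀ q ∈ Q, 0 ≤ g q := fun q _ => by positivity
  have hp := hQ.tendsto_of_penalized_ge hfQ (by fun_prop) hg0 hstrict hpQ hlow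
  obtain ⟨hfp, hgp⟩ := tendsto_penalty_of_penalized_ge (hfQ _ (mem_of_mem_nhds hQ₀)) hg0 hpQ hlow hp
  refine ⟨p, hp, ?_, hgp, ?_⟩
  · have hrest : Tendsto (fun n => c * (p n).2 - ((p n).2 - t₀) ^ 2) atTop
        (𝓝 (c * t₀ - (t₀ - t₀) ^ 2)) :=
      ((by fun_prop : Continuous fun q : E × ℝ => c * q.2 - (q.2 - t₀) ^ 2).tendsto _).comp hp
    simpa [f] using hfp.sub hrest
  · filter_upwards [hp.eventually (eventually_mem_nhds_iff.2 hQ₀)] with n hn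
    exact (hpmax n).isLocalMax hn

end Doubling

section Viscosity

variable {E : Type*} [NormedAddCommGroup E] [InnerProductSpace ℝ E] {u : E → ℝ} {X : ℝ → E}
  {c t₀ a t : ℝ} {y : E}

theorem LipschitzOnWith.abs_inner_sub_le {s : Set E} {K : ℝ≥0} {b : E → E}
    (hb : LipschitzOnWith K b s) {y z : E} (hy : y ∈ s) (hz : z ∈ s) :
    |⟪b y - b z, y - z⟫| ≤ K * ‖y - z‖ ^ 2 :=
  calc |⟪b y - b z, y - z⟫| ≤ ‖b y - b z‖ * ‖y - z‖ := abs_real_inner_le_norm _ _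
    _ ≤ K * ‖y - z‖ * ‖y - z‖ := by gcongr; exact hb.norm_sub_le hy hz
    _ = K * ‖y - z‖ ^ 2 := by ring

def IsViscositySubsolution [CompleteSpace E] (Ω : Set E) (b : E → E) (lam ep M : ℝ)
    (u : E → ℝ) : Prop :=
  ∀ φ : E → ℝ, ContDiff ℝ 1 φ → ∀ z ∈ Ω, IsLocalMaxOn (fun x => u x - φ x) Ω z →
    lam * u z - ep⁻¹ * ⟪b z, gradient φ z⟫ - M ≤ 0

theorem IsViscositySubsolution.le_of_isLocalMax_doublingFunctional [CompleteSpace E]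
    {Ω : Set E} {b : E → E} {lam ep M : ℝ} (hsub : IsViscositySubsolution Ω b lam ep M u)
    (hy : y ∈ Ω) (hmax : IsLocalMax (doublingFunctional u X c t₀ a) (y, t)) :
    lam * u y - ep⁻¹ * (2 * a * ⟪b y, y - X t⟫) - M ≤ 0 := by
  have hslice : IsLocalMaxOn (fun x => u x - a * ‖x - X t‖ ^ 2) Ω y := by
    filter_upwards [(hmax.comp_continuous (g := fun x => (x, t)) (by fun_prop)).on Ω]
      with x hx
    simp only [doublingFunctional, Function.comp_apply] at hx ⊢
    linarith
  have hφ : HasFDerivAt (fun x => a * ‖x - X t‖ ^ 2) (a • 2 • innerSL ℝ (y - X t)) y :=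
    (((hasFDerivAt_id y).sub_const (X t)).norm_sq).const_mul a
  have hφb : fderiv ℝ (fun x => a * ‖x - X t‖ ^ 2) y (b y) = 2 * a * ⟪b y, y - X t⟫ := by
    simp [hφ.fderiv, inner_sub_right, real_inner_comm (b y)]
    ring
  have hC1 : ContDiff ℝ 1 fun x => a * ‖x - X t‖ ^ 2 :=
    contDiff_const.mul ((contDiff_id.sub contDiff_const).norm_sq ℝ)
  have h := hsub _ hC1 y hy hslice
  rwa [inner_gradient_right, conj_trivial, hφb] at h

theorem inner_eq_of_isLocalMax_doublingFunctional {v : E} (hX : HasDerivAt X v t)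
    (hmax : IsLocalMax (doublingFunctional u X c t₀ a) (y, t)) :
    2 * a * ⟪y - X t, v⟫ = 2 * (t - t₀) - c := by
  have hslice : IsLocalMax (fun s => c * s - (s - t₀) ^ 2 - a * ‖y - X s‖ ^ 2) t := by
    filter_upwards [hmax.comp_continuous (g := fun s => (y, s)) (by fun_prop)] with s hs
    simp only [doublingFunctional, Function.comp_apply] at hs
    linarith
  have hsq := ((hasDerivAt_id t).sub_const t₀).pow 2
  simp only [id, Nat.cast_ofNat, mul_one] at hsq
  have hderiv : HasDerivAt (fun s => c * s - (s - t₀) ^ 2 - a * ‖y - X s‖ ^ 2)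
      (c - 2 * (t - t₀) - a * (2 * ⟪y - X t, 0 - v⟫)) t :=
    (((hasDerivAt_id t).const_mul c).sub hsq).sub
      (((hasDerivAt_const t y).sub hX).norm_sq.const_mul a) |>.congr_deriv (by simp)
  have := hslice.hasDerivAt_eq_zero hderiv
  rw [zero_sub, inner_neg_right] at this
  linarith

theorem IsViscositySubsolution.le_of_isLocalMax_comp [ProperSpace E] {Ω : Set E} {b : E → E}
    {lam ep M : ℝ} (hsub : IsViscositySubsolution Ω b lam ep M u) (hΩ : IsOpen Ω)
    (hb : LocallyLipschitzOn Ω b) (hu : UpperSemicontinuousOn u Ω)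
    (hX : ∀ t, HasDerivAt X (b (X t)) t) (ht₀ : X t₀ ∈ Ω)
    (hmax : IsLocalMax (fun t => u (X t) + c * t) t₀) :
    lam * u (X t₀) + ep⁻¹ * c - M ≤ 0 := by
  have hXc : Continuous X := continuous_iff_continuousAt.2 fun t => (hX t).continuousAt
  obtain ⟨p, hp, hup, hgp, hloc⟩ :=
    exists_seq_isLocalMax_doublingFunctional hΩ hu hXc ht₀ hmax
  obtain ⟨K, s, hs, hK⟩ := hb ht₀
  rw [nhdsWithin_eq_nhds.2 (hΩ.mem_nhds ht₀)] at hs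
  have hy : Tendsto (fun n => (p n).1) atTop (𝓝 (X t₀)) := (continuous_fst.tendsto _).comp hp
  have ht : Tendsto (fun n => (p n).2) atTop (𝓝 t₀) := (continuous_snd.tendsto _).comp hp
  have hXt : Tendsto (fun n => X (p n).2) atTop (𝓝 (X t₀)) := (hXc.tendsto _).comp ht
  have herr : Tendsto (fun n : ℕ => 2 * n * ⟪b (p n).1 - b (X (p n).2), (p n).1 - X (p n).2⟫)
      atTop (𝓝 0) := by
    refine squeeze_zero_norm' ?_ (by simpa using hgp.const_mul (2 * (K : ℝ)))
    filter_upwards [hy.eventually hs, hXt.eventually hs] with n hys hXs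
    rw [Real.norm_eq_abs, abs_mul, abs_of_nonneg (by positivity)]
    have := mul_le_mul_of_nonneg_left (hK.abs_inner_sub_le hys hXs)
      (by positivity : (0 : ℝ) ≤ 2 * n)
    linarith
  have hw : Tendsto (fun n : ℕ => 2 * n * ⟪b (p n).1, (p n).1 - X (p n).2⟫) atTop
      (𝓝 (-c)) := by
    have hlim := (((ht.sub_const t₀).const_mul 2).sub_const c).add herr
    rw [sub_self, mul_zero, zero_sub, add_zero] at hlim
    refine hlim.congr' ?_
    filter_upwards [hloc] with n hn
    have := inner_eq_of_isLocalMax_doublingFunctional (hX _) hn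
    rw [real_inner_comm] at this
    rw [inner_sub_left]
    linarith
  have hineq : ∀ᶠ n : ℕ in atTop,
      lam * u (p n).1 - ep⁻¹ * (2 * n * ⟪b (p n).1, (p n).1 - X (p n).2⟫) - M ≤ 0 := by
    filter_upwards [hloc, hy.eventually (hΩ.mem_nhds ht₀)] with n hn hyΩ
    exact hsub.le_of_isLocalMax_doublingFunctional hyΩ hn
  have := le_of_tendsto (((hup.const_mul lam).sub (hw.const_mul ep⁻¹)).sub_const M) hineq
  linarith

end Viscosity

section Slope

variable {w : ℝ → ℝ} {C κ : ℝ}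

theorem exists_max_add_mul_on_Iic (hw : UpperSemicontinuous w) (hC : ∀ t, |w t| ≤ C)
    {c : ℝ} (hc : 0 < c) (b : ℝ) : ∃ t₀ ≤ b, ∀ t ≤ b, w t + c * t ≤ w t₀ + c * t₀ := by
  have hR : 0 ≤ 2 * C / c := div_nonneg (by linarith [(abs_nonneg _).trans (hC 0)]) hc.le
  obtain ⟨t₀, ⟨-, ht₀⟩, hmax⟩ :=
    ((hw.add (continuous_const_mul c).upperSemicontinuous).upperSemicontinuousOn
      (Icc (b - 2 * C / c) b)).exists_isMaxOn
      (nonempty_Icc.2 (by linarith)) isCompact_Icc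
  refine ⟨t₀, ht₀, fun t ht => ?_⟩
  -- left of `b - 2C/c` the linear term loses more than the oscillation `2C` of `w`
  rcases le_or_gt (b - 2 * C / c) t with h | h
  · exact hmax ⟨h, ht⟩
  · have hb : w b + c * b ≤ w t₀ + c * t₀ := hmax ⟨by linarith, le_rfl⟩
    have hct : c * t < c * b - 2 * C := by
      have := mul_lt_mul_of_pos_left h hc
      rwa [mul_sub, mul_div_cancel₀ _ hc.ne'] at this
    linarith [abs_le.1 (hC t), abs_le.1 (hC b)]

theorem le_add_mul_of_isLocalMax_imp_le (hw : UpperSemicontinuous w) (hC : ∀ t, |w t| ≤ C)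
    (hκ : 0 ≤ κ) (hslope : ∀ c t₀, IsLocalMax (fun t => w t + c * t) t₀ → c ≤ κ) {a b : ℝ}
    (hab : a ≤ b) : w a ≤ w b + κ * (b - a) := by
  have key : ∀ c > κ, w a ≤ w b + c * (b - a) := by
    intro c hc
    obtain ⟨t₀, ht₀, hmax⟩ := exists_max_add_mul_on_Iic hw hC (hκ.trans_lt hc) b
    obtain rfl : t₀ = b := by
      refine ht₀.eq_or_lt.resolve_right fun hlt => hc.not_ge (hslope c t₀ ?_)
      filter_upwards [Iio_mem_nhds hlt] with t ht using hmax t ht.le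
    linarith [hmax a hab]
  exact ge_of_tendsto (x := 𝓝[>] κ)
    ((Continuous.tendsto (by fun_prop) κ).mono_left nhdsWithin_le_nhds)
    (eventually_nhdsWithin_of_forall key)

theorem Function.Periodic.abs_sub_le_of_le_add_mul {T : ℝ} (hw : Function.Periodic w T)
    (hT : 0 < T) (hκ : 0 ≤ κ) (h : ∀ a b, a ≤ b → w a ≤ w b + κ * (b - a)) (s s' : ℝ) :
    |w s - w s'| ≤ κ * T := by
  have key : ∀ s s', w s - w s' ≤ κ * T := fun s s' => by
    obtain ⟨r, ⟨hsr, hrs⟩, hr⟩ := hw.exists_mem_Ico hT s' s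
    have := mul_le_mul_of_nonneg_left (by linarith : r - s ≤ T) hκ
    linarith [h s r hsr]
  exact abs_sub_le_iff.2 ⟨key s s', key s' s⟩

end Slope

section Trajectory

variable {E : Type*} [NormedAddCommGroup E] [InnerProductSpace ℝ E] [ProperSpace E]
  {Ω : Set E} {b : E → E} {lam ep M C : ℝ} {u : E → ℝ} {X : ℝ → E}

theorem IsViscositySubsolution.le_add_mul_along_trajectory
    (hsub : IsViscositySubsolution Ω b lam ep M u) (hΩ : IsOpen Ω) (hb : LocallyLipschitzOn Ω b)
    (hu : UpperSemicontinuousOn u Ω) (hX : ∀ t, HasDerivAt X (b (X t)) t) (hXΩ : ∀ t, X t ∈ Ω)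
    (hlam : 0 ≤ lam) (hep : 0 < ep) (hC : ∀ t, |u (X t)| ≤ C) (hMC : M ≤ C) {t₁ t₂ : ℝ}
    (ht : t₁ ≤ t₂) : u (X t₁) ≤ u (X t₂) + ep * C * (lam + 1) * (t₂ - t₁) := by
  have hC0 : 0 ≤ C := (abs_nonneg _).trans (hC 0)
  have hXc : Continuous X := continuous_iff_continuousAt.2 fun t => (hX t).continuousAt
  have hw : UpperSemicontinuous (u ∘ X) :=
    upperSemicontinuousOn_univ_iff.1 (hu.comp hXc.continuousOn fun t _ => hXΩ t)
  refine le_add_mul_of_isLocalMax_imp_le hw hC (by positivity) (fun c t₀ hmax => ?_) ht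
  have h := hsub.le_of_isLocalMax_comp hΩ hb hu hX (hXΩ t₀) hmax
  have h' : ep⁻¹ * c ≤ C * (lam + 1) := by nlinarith [abs_le.1 (hC t₀)]
  calc c = ep * (ep⁻¹ * c) := by field_simp
    _ ≤ ep * (C * (lam + 1)) := by gcongr
    _ = ep * C * (lam + 1) := by ring

end Trajectory

theorem oscillation_along_periodic_orbit_general
    (Ω : Set E2) (hΩ : IsOpen Ω)
    (b : E2 → E2)
    (hb : ∀ x ∈ Ω, ∃ K : NNReal, ∃ s ∈ nhdsWithin x Ω, LipschitzOnWith K b s)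
    (lam ep M : ℝ) (hlam : 0 < lam) (hep : 0 < ep)
    (u : E2 → ℝ) (hub : ∃ C : ℝ, ∀ x ∈ Ω, |u x| ≤ C)
    (hu : UpperSemicontinuousOn u Ω)
    (husub : ∀ φ : E2 → ℝ, ContDiff ℝ 1 φ → ∀ z ∈ Ω,
      IsLocalMaxOn (fun x => u x - φ x) Ω z →
      lam * u z - ep⁻¹ * (inner ℝ (b z) (gradient φ z) : ℝ) - M ≤ 0)
    (X : ℝ → E2) (hXΩ : ∀ t : ℝ, X t ∈ Ω)
    (hX : ∀ t : ℝ, HasDerivAt X (b (X t)) t)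
    (T : ℝ) (hT : 0 < T) (hper : Function.Periodic X T) :
    ∀ s s' : ℝ,
      |u (X s) - u (X s')| ≤
        2 * ep * max M (sSup ((fun x => |u x|) '' Ω)) * (lam + 1) * T := by
  set C := max M (sSup ((fun x => |u x|) '' Ω))
  obtain ⟨C₀, hC₀⟩ := hub
  have hC : ∀ t, |u (X t)| ≤ C := fun t =>
    le_max_of_le_right (le_csSup ⟨C₀, forall_mem_image.2 hC₀⟩ (mem_image_of_mem _ (hXΩ t)))
  have hC0 : 0 ≤ C := (abs_nonneg _).trans (hC 0)
  have hsub : IsViscositySubsolution Ω b lam ep M u := husub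
  intro s s'
  have hosc := (hper.comp u).abs_sub_le_of_le_add_mul hT (by positivity)
    (fun t₁ t₂ ht => hsub.le_add_mul_along_trajectory hΩ hb hu hX hXΩ hlam.le hep hC
      (le_max_left _ _) ht) s s'
  have : 0 ≤ ep * C * (lam + 1) * T := by positivity
  simp only [Function.comp_apply] at hosc
  linarith

/-- Quantitative almost-constancy along periodic orbits: if `u` is a
bounded upper semicontinuous viscosity subsolution of `λ u − ε⁻¹ b·Du − M = 0` in `Ω`
and `X` is a `T`-periodic orbit of `b` in `Ω`, then with `C = max{M, sup_Ω |u|}` one has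
`|u(X(s)) − u(X(s'))| ≤ 2 ε C (λ + 1) T` for all `s, s'`. -/
theorem oscillation_along_periodic_orbit
    (Ω : Set E2) (hΩ : IsOpen Ω)
    (b : E2 → E2)
    (hb : ∀ x ∈ Ω, ∃ K : NNReal, ∃ s ∈ nhdsWithin x Ω, LipschitzOnWith K b s)
    (lam ep M : ℝ) (hlam : 0 < lam) (hep : 0 < ep) (hM : 0 ≤ M)
    (u : E2 → ℝ) (hub : ∃ C : ℝ, ∀ x ∈ Ω, |u x| ≤ C)
    (hu : UpperSemicontinuousOn u Ω)
    (husub : ∀ φ : E2 → ℝ, ContDiff ℝ 1 φ → ∀ z ∈ Ω,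
      IsLocalMaxOn (fun x => u x - φ x) Ω z →
      lam * u z - ep⁻¹ * (inner ℝ (b z) (gradient φ z) : ℝ) - M ≤ 0)
    (X : ℝ → E2) (hXΩ : ∀ t : ℝ, X t ∈ Ω)
    (hX : ∀ t : ℝ, HasDerivAt X (b (X t)) t)
    (T : ℝ) (hT : 0 < T) (hper : Function.Periodic X T) :
    ∀ s s' : ℝ,
      |u (X s) - u (X s')| ≤
        2 * ep * max M (sSup ((fun x => |u x|) '' Ω)) * (lam + 1) * T :=
  oscillation_along_periodic_orbit_general Ω hΩ b hb lam ep M hlam hep u hub hu husub X hXΩ hX T hT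
    hper
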